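/- Let β₁, β₂ ∈ ℝ and N ≥ 1, and define I(β₁, β₂) = ∫₀^N e^{2πi(β₁ξ + β₂ξ²)} dξ. Then |I(β₁, β₂)| ≤ C N · max(1, N|β₁|, N²|β₂|)^{−1/2} for an absolute constant C. -/

import Mathlib

open Real intervalIntegral
noncomputable def EE (b u : ℝ) : ℂ := Complex.exp (2*π*Complex.I*b*u^2)

lemma EE_def (b u : ℝ) : EE b u = Complex.exp (2*π*Complex.I*b*u^2) := rfl

lemma normEE (b u : ℝ) : ‖EE b u‖ = 1 := by
  have h : (2*(π:ℂ)*Complex.I*b*u^2 : ℂ) = (((2*π*b*u^2 : ℝ)):ℂ) * Complex.I := by push_cast; ring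
  rw [EE_def, h, Complex.norm_exp_ofReal_mul_I]

lemma contEE (b : ℝ) : Continuous (EE b) := by
  apply Complex.continuous_exp.comp; continuity

lemma hasDerivEE (b u : ℝ) : HasDerivAt (EE b) (2*π*Complex.I*b*(2*u) * EE b u) u := by
  have h1 : HasDerivAt (fun u : ℝ => ((u:ℂ)^2)) (2*u) u := by
    have := (hasDerivAt_pow 2 (u:ℂ)).comp_ofReal
    simpa using this
  have h2 := (h1.const_mul ((2:ℂ)*π*Complex.I*b)).cexp
  have hf : EE b = fun x : ℝ => Complex.exp ((2:ℂ)*π*Complex.I*b * (x:ℂ)^2) := by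
    funext x; rw [EE_def]
  rw [hf]
  convert h2 using 1
  simp; ring

lemma normAux (x : ℝ) : ‖((x:ℂ))*Complex.I‖ = |x| := by simp

lemma hasDerivF (b : ℝ) (hb : b ≠ 0) (u : ℝ) (hu : u ≠ 0) :
    HasDerivAt (fun u : ℝ => EE b u / (4*π*Complex.I*b*u))
      (EE b u - EE b u / (4*π*Complex.I*b*u^2)) u := by
  have hc : (4*(π:ℂ)*Complex.I*b) ≠ 0 := by
    simp [Complex.ext_iff, pi_ne_zero, hb]
  have hg : HasDerivAt (fun x : ℝ => (4*(π:ℂ)*Complex.I*b) * x) (4*(π:ℂ)*Complex.I*b) u := by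
    simpa using (Complex.ofRealCLM.hasDerivAt (x := u)).const_mul (4*(π:ℂ)*Complex.I*b)
  have hden : (4*(π:ℂ)*Complex.I*b) * u ≠ 0 :=
    mul_ne_zero hc (by exact_mod_cast hu)
  have h := (hasDerivEE b u).fun_div hg hden
  refine h.congr_deriv ?_
  have hu' : (u:ℂ) ≠ 0 := by exact_mod_cast hu
  have hb' : (b:ℂ) ≠ 0 := by exact_mod_cast hb
  have hπ' : (π:ℂ) ≠ 0 := by exact_mod_cast pi_ne_zero
  field_simp
  ring

lemma intInv2 (a c : ℝ) (ha : 0 < a) (hac : a ≤ c) :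
    ∫ u in a..c, (u^2)⁻¹ = a⁻¹ - c⁻¹ := by
  have hne : ∀ u ∈ Set.uIcc a c, u ≠ 0 := by
    intro u hu
    rw [Set.uIcc_of_le hac] at hu
    exact ne_of_gt (lt_of_lt_of_le ha hu.1)
  have key := intervalIntegral.integral_eq_sub_of_hasDerivAt
    (f := fun u : ℝ => -u⁻¹) (f' := fun u : ℝ => (u^2)⁻¹) (a := a) (b := c)
    (fun u hu => by simpa [Pi.neg_def] using (hasDerivAt_inv (hne u hu)).neg)
    (((continuous_pow 2).continuousOn.inv₀
      (fun u hu => pow_ne_zero 2 (hne u hu))).intervalIntegrable)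
  rw [show a⁻¹ - c⁻¹ = -c⁻¹ - -a⁻¹ by ring]
  exact key

lemma far (b : ℝ) (hb : b ≠ 0) (a c : ℝ) (ha : 0 < a) (hac : a ≤ c) :
    ‖∫ u in a..c, EE b u‖ ≤ 1/(2*π*|b| * a) := by
  have hne : ∀ u ∈ Set.uIcc a c, u ≠ 0 := by
    intro u hu
    rw [Set.uIcc_of_le hac] at hu
    exact ne_of_gt (lt_of_lt_of_le ha hu.1)
  have hcont2 : ContinuousOn (fun u : ℝ => EE b u / (4*π*Complex.I*b*u^2)) (Set.uIcc a c) := by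
    apply (contEE b).continuousOn.div
    · exact (Continuous.continuousOn (by continuity))
    · intro u hu
      have hu' : (u:ℂ) ≠ 0 := by exact_mod_cast hne u hu
      have hc : (4*(π:ℂ)*Complex.I*b) ≠ 0 := by
        simp [Complex.ext_iff, pi_ne_zero, hb]
      have : (4*(π:ℂ)*Complex.I*b*u^2) = (4*(π:ℂ)*Complex.I*b)*(u:ℂ)^2 := by ring
      rw [this]
      exact mul_ne_zero hc (pow_ne_zero 2 hu')
  have hi2 : IntervalIntegrable (fun u : ℝ => EE b u / (4*π*Complex.I*b*u^2)) MeasureTheory.volume a c :=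
    hcont2.intervalIntegrable
  have hi1 : IntervalIntegrable (EE b) MeasureTheory.volume a c :=
    (contEE b).intervalIntegrable a c
  have key := intervalIntegral.integral_eq_sub_of_hasDerivAt
    (f := fun u : ℝ => EE b u / (4*π*Complex.I*b*u))
    (f' := fun u : ℝ => EE b u - EE b u / (4*π*Complex.I*b*u^2)) (a := a) (b := c)
    (fun u hu => hasDerivF b hb u (hne u hu))
    (hi1.sub hi2)
  rw [intervalIntegral.integral_sub hi1 hi2] at key
  -- ∫ EE = (F c - F a) + ∫ EE/(4πIbu²)
  have split : (∫ u in a..c, EE b u) =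
      (EE b c / (4*π*Complex.I*b*c) - EE b a / (4*π*Complex.I*b*a))
      + ∫ u in a..c, EE b u / (4*π*Complex.I*b*u^2) := by
    rw [← key]; ring
  have hc' : 0 < c := lt_of_lt_of_le ha hac
  have hπ : (0:ℝ) < π := pi_pos
  have hbpos : 0 < |b| := abs_pos.2 hb
  -- norms of boundary terms
  have hnorm : ∀ t : ℝ, 0 < t → ‖EE b t / (4*π*Complex.I*b*t)‖ = 1/(4*π*|b| * t) := by
    intro t ht
    rw [norm_div, normEE]
    have : (4*(π:ℂ)*Complex.I*b*t) = ((4*π*b*t : ℝ):ℂ)*Complex.I := by push_cast; ring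
    rw [this, normAux]
    rw [abs_mul, abs_mul, abs_mul]
    rw [abs_of_pos ht, abs_of_pos hπ, abs_of_nonneg (by norm_num : (0:ℝ) ≤ 4)]
  -- norm of remainder integral
  have hrem : ‖∫ u in a..c, EE b u / (4*π*Complex.I*b*u^2)‖ ≤ 1/(4*π*|b|)*(a⁻¹ - c⁻¹) := by
    have hle := intervalIntegral.norm_integral_le_integral_norm (f := fun u : ℝ => EE b u / (4*π*Complex.I*b*u^2)) (μ := MeasureTheory.volume) hac
    refine hle.trans ?_
    have heq : ∀ u ∈ Set.uIcc a c, ‖EE b u / (4*π*Complex.I*b*u^2)‖ = 1/(4*π*|b|)*(u^2)⁻¹ := by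
      intro u hu
      have hu0 : 0 < u := lt_of_lt_of_le ha (by rw [Set.uIcc_of_le hac] at hu; exact hu.1)
      rw [norm_div, normEE]
      have : (4*(π:ℂ)*Complex.I*b*u^2) = ((4*π*b*u^2 : ℝ):ℂ)*Complex.I := by push_cast; ring
      rw [this, normAux]
      rw [abs_mul, abs_mul, abs_mul, abs_of_pos (pow_pos hu0 2), abs_of_pos hπ,
        abs_of_nonneg (by norm_num : (0:ℝ) ≤ 4)]
      field_simp
    rw [intervalIntegral.integral_congr heq, intervalIntegral.integral_const_mul,
      intInv2 a c ha hac]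
  calc ‖∫ u in a..c, EE b u‖
      ≤ (‖EE b c / (4*π*Complex.I*b*c)‖ + ‖EE b a / (4*π*Complex.I*b*a)‖)
        + ‖∫ u in a..c, EE b u / (4*π*Complex.I*b*u^2)‖ := by
        rw [split]
        exact (norm_add_le _ _).trans (by gcongr; exact norm_sub_le _ _)
    _ ≤ (1/(4*π*|b| * c) + 1/(4*π*|b| * a)) + 1/(4*π*|b|)*(a⁻¹ - c⁻¹) := by
        rw [hnorm c hc', hnorm a ha]
        gcongr
    _ = 1/(2*π*|b| * a) := by field_simp; ring

lemma flipEE (b a c : ℝ) : ∫ u in a..c, EE b u = ∫ u in (-c)..(-a), EE b u := by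
  rw [← intervalIntegral.integral_comp_neg (f := EE b)]
  apply intervalIntegral.integral_congr
  intro u _
  simp only [EE_def]
  push_cast
  ring_nf

lemma fresnelT (b : ℝ) (hb : b ≠ 0) (t : ℝ) :
    ‖∫ u in (0:ℝ)..t, EE b u‖ ≤ 2 / Real.sqrt |b| := by
  have hbpos : 0 < |b| := abs_pos.2 hb
  have hs : 0 < Real.sqrt |b| := Real.sqrt_pos.2 hbpos
  set r : ℝ := (Real.sqrt |b|)⁻¹ with hr
  have hrpos : 0 < r := inv_pos.2 hs
  have hr2 : |b| * r^2 = 1 := by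
    rw [hr, inv_pow, Real.sq_sqrt hbpos.le, mul_inv_cancel₀ hbpos.ne']
  have key : ∀ t : ℝ, 0 ≤ t → ‖∫ u in (0:ℝ)..t, EE b u‖ ≤ 2 * r := by
    intro t ht
    have trivial_bound : ∀ x y : ℝ, x ≤ y → ‖∫ u in x..y, EE b u‖ ≤ y - x := by
      intro x y hxy
      have := intervalIntegral.norm_integral_le_of_norm_le_const
        (C := 1) (f := EE b) (a := x) (b := y) (fun u _ => le_of_eq (normEE b u))
      simpa [abs_of_nonneg (sub_nonneg.2 hxy)] using this
    rcases le_or_gt t r with h | h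
    · calc ‖∫ u in (0:ℝ)..t, EE b u‖ ≤ t - 0 := trivial_bound 0 t ht
        _ ≤ 2 * r := by linarith
    · have hsplit : (∫ u in (0:ℝ)..r, EE b u) + ∫ u in r..t, EE b u = ∫ u in (0:ℝ)..t, EE b u :=
        intervalIntegral.integral_add_adjacent_intervals
          ((contEE b).intervalIntegrable 0 r) ((contEE b).intervalIntegrable r t)
      rw [← hsplit]
      have h1 : ‖∫ u in (0:ℝ)..r, EE b u‖ ≤ r := by
        simpa using trivial_bound 0 r hrpos.le
      have h2 : ‖∫ u in r..t, EE b u‖ ≤ 1/(2*π*|b| * r) := far b hb r t hrpos h.le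
      have h3 : 1/(2*π*|b| * r) ≤ r := by
        rw [div_le_iff₀ (by positivity)]
        have : r * (2*π*|b| * r) = 2*π*(|b| * r^2) := by ring
        rw [this, hr2]
        nlinarith [pi_gt_three]
      calc ‖(∫ u in (0:ℝ)..r, EE b u) + ∫ u in r..t, EE b u‖
          ≤ ‖∫ u in (0:ℝ)..r, EE b u‖ + ‖∫ u in r..t, EE b u‖ := norm_add_le _ _
        _ ≤ r + r := add_le_add h1 (h2.trans h3)
        _ = 2 * r := by ring
  have h2r : 2 * r = 2 / Real.sqrt |b| := by rw [hr]; field_simp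
  rcases le_or_gt 0 t with ht | ht
  · rw [← h2r]; exact key t ht
  · have : (∫ u in (0:ℝ)..t, EE b u) = -∫ u in (0:ℝ)..(-t), EE b u := by
      rw [← intervalIntegral.integral_symm, flipEE]
      norm_num
    rw [this, norm_neg, ← h2r]
    exact key (-t) (by linarith)

lemma fresnel (b : ℝ) (hb : b ≠ 0) (a c : ℝ) :
    ‖∫ u in a..c, EE b u‖ ≤ 4 / Real.sqrt |b| := by
  have hsplit : (∫ u in (0:ℝ)..a, EE b u) + ∫ u in a..c, EE b u = ∫ u in (0:ℝ)..c, EE b u :=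
    intervalIntegral.integral_add_adjacent_intervals
      ((contEE b).intervalIntegrable 0 a) ((contEE b).intervalIntegrable a c)
  have : (∫ u in a..c, EE b u) = (∫ u in (0:ℝ)..c, EE b u) - ∫ u in (0:ℝ)..a, EE b u := by
    rw [← hsplit]; ring
  rw [this]
  calc ‖(∫ u in (0:ℝ)..c, EE b u) - ∫ u in (0:ℝ)..a, EE b u‖
      ≤ ‖∫ u in (0:ℝ)..c, EE b u‖ + ‖∫ u in (0:ℝ)..a, EE b u‖ := norm_sub_le _ _
    _ ≤ 2 / Real.sqrt |b| + 2 / Real.sqrt |b| := add_le_add (fresnelT b hb c) (fresnelT b hb a)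
    _ = 4 / Real.sqrt |b| := by ring

lemma normPhase (x : ℝ) : ‖Complex.exp (2*π*Complex.I*(x:ℂ))‖ = 1 := by
  have h : (2*(π:ℂ)*Complex.I*x) = ((2*π*x:ℝ):ℂ)*Complex.I := by push_cast; ring
  rw [h, Complex.norm_exp_ofReal_mul_I]

lemma normI (β₁ β₂ N : ℝ) (hb2 : β₂ ≠ 0) :
    ‖∫ ξ in (0:ℝ)..N, Complex.exp (2*π*Complex.I*((β₁*ξ + β₂*ξ^2 : ℝ):ℂ))‖
      = ‖∫ u in (β₁/(2*β₂))..(N + β₁/(2*β₂)), EE β₂ u‖ := by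
  set a : ℝ := β₁/(2*β₂) with ha
  have hβ : (β₁:ℂ) = 2*(β₂:ℂ)*(a:ℂ) := by
    rw [ha]; push_cast
    have hb2' : (β₂:ℂ) ≠ 0 := by exact_mod_cast hb2
    field_simp
  have key : ∀ ξ : ℝ, Complex.exp (2*π*Complex.I*((β₁*ξ + β₂*ξ^2 : ℝ):ℂ))
      = Complex.exp (2*π*Complex.I*((-(β₂*a^2) : ℝ):ℂ)) * EE β₂ (ξ + a) := by
    intro ξ
    rw [EE_def, ← Complex.exp_add]
    congr 1
    push_cast
    rw [hβ]
    ring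
  rw [intervalIntegral.integral_congr (g :=
    fun ξ : ℝ => Complex.exp (2*π*Complex.I*((-(β₂*a^2) : ℝ):ℂ)) * EE β₂ (ξ + a))
    (fun ξ _ => key ξ)]
  rw [intervalIntegral.integral_const_mul, norm_mul, normPhase, one_mul]
  rw [intervalIntegral.integral_comp_add_right (f := EE β₂), zero_add]

lemma linCase (β₁ N : ℝ) (hb1 : β₁ ≠ 0) :
    ‖∫ ξ in (0:ℝ)..N, Complex.exp (2*π*Complex.I*((β₁*ξ + 0*ξ^2 : ℝ):ℂ))‖ ≤ 1/|β₁| := by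
  have hc : (2*(π:ℂ)*Complex.I*β₁) ≠ 0 := by
    simp [Complex.ext_iff, pi_ne_zero, hb1]
  have key : ∀ ξ : ℝ, Complex.exp (2*π*Complex.I*((β₁*ξ + 0*ξ^2 : ℝ):ℂ))
      = Complex.exp ((2*π*Complex.I*β₁) * ξ) := by
    intro ξ; congr 1; push_cast; ring
  rw [intervalIntegral.integral_congr (g := fun ξ : ℝ => Complex.exp ((2*π*Complex.I*β₁) * ξ))
    (fun ξ _ => key ξ)]
  rw [integral_exp_mul_complex hc]
  rw [norm_div]
  have hnum : ‖Complex.exp (2*π*Complex.I*β₁*N) - Complex.exp (2*π*Complex.I*β₁*(0:ℝ))‖ ≤ 2 := by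
    have e1 : ‖Complex.exp (2*π*Complex.I*β₁*(N:ℝ))‖ = 1 := by
      have h : (2*(π:ℂ)*Complex.I*β₁*(N:ℝ)) = 2*(π:ℂ)*Complex.I*((β₁*N : ℝ):ℂ) := by push_cast; ring
      rw [h]; exact normPhase _
    have e2 : ‖Complex.exp (2*π*Complex.I*β₁*((0:ℝ):ℂ))‖ = 1 := by
      have h : (2*(π:ℂ)*Complex.I*β₁*((0:ℝ):ℂ)) = 2*(π:ℂ)*Complex.I*((β₁*0 : ℝ):ℂ) := by push_cast; ring
      rw [h]; exact normPhase _
    calc ‖Complex.exp (2*π*Complex.I*β₁*N) - Complex.exp (2*π*Complex.I*β₁*(0:ℝ))‖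
        ≤ ‖Complex.exp (2*π*Complex.I*β₁*(N:ℝ))‖ + ‖Complex.exp (2*π*Complex.I*β₁*((0:ℝ):ℂ))‖ :=
          norm_sub_le _ _
      _ = 2 := by rw [e1, e2]; norm_num
  have hden : ‖(2*(π:ℂ)*Complex.I*β₁)‖ = 2*π*|β₁| := by
    have h : (2*(π:ℂ)*Complex.I*β₁) = ((2*π*β₁ : ℝ):ℂ)*Complex.I := by push_cast; ring
    rw [h, normAux, abs_mul, abs_mul, abs_of_pos pi_pos,
      abs_of_nonneg (by norm_num : (0:ℝ) ≤ 2)]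
  rw [hden]
  have hπ : (1:ℝ) ≤ π := by linarith [pi_gt_three]
  have hb : 0 < |β₁| := abs_pos.2 hb1
  calc ‖Complex.exp (2*π*Complex.I*β₁*N) - Complex.exp (2*π*Complex.I*β₁*(0:ℝ))‖ / (2*π*|β₁|)
      ≤ 2 / (2*π*|β₁|) := by gcongr
    _ ≤ 1/|β₁| := by rw [div_le_div_iff₀ (by positivity) hb]; nlinarith

/-- Van der Corput estimate for the oscillatory integral
`I(β₁,β₂) = ∫₀^N e^{2πi(β₁ξ + β₂ξ²)} dξ`. -/
theorem stmt14 :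
    ∃ C > (0 : ℝ), ∀ (N : ℝ), 1 ≤ N → ∀ β₁ β₂ : ℝ,
      ‖∫ ξ in (0 : ℝ)..N,
          Complex.exp (2 * Real.pi * Complex.I * ((β₁ * ξ + β₂ * ξ ^ 2 : ℝ) : ℂ))‖ ≤
        C * N * (max 1 (max (N * |β₁|) (N ^ 2 * |β₂|))) ^ (-(1 / 2 : ℝ)) := by
  refine ⟨16, by norm_num, ?_⟩
  intro N hN β₁ β₂
  set M := max 1 (max (N * |β₁|) (N ^ 2 * |β₂|)) with hM
  have hN0 : 0 < N := lt_of_lt_of_le one_pos hN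
  have hM1 : (1:ℝ) ≤ M := le_max_left _ _
  have hM0 : 0 < M := lt_of_lt_of_le one_pos hM1
  have hrpow : M ^ (-(1/2:ℝ)) = (Real.sqrt M)⁻¹ := by
    rw [Real.rpow_neg hM0.le, Real.sqrt_eq_rpow]
  rw [hrpow]
  have hsM : 0 < Real.sqrt M := Real.sqrt_pos.2 hM0
  have trivialB : ‖∫ ξ in (0:ℝ)..N,
      Complex.exp (2*π*Complex.I*((β₁*ξ + β₂*ξ^2 : ℝ):ℂ))‖ ≤ N := by
    have := intervalIntegral.norm_integral_le_of_norm_le_const (C := 1) (a := (0:ℝ)) (b := N)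
      (f := fun ξ : ℝ => Complex.exp (2*π*Complex.I*((β₁*ξ + β₂*ξ^2 : ℝ):ℂ)))
      (fun ξ _ => le_of_eq (normPhase _))
    simpa [abs_of_pos hN0] using this
  by_cases h1 : N * |β₁| ≤ 1 ∧ N ^ 2 * |β₂| ≤ 1
  · have hM' : M = 1 := by
      rw [hM, max_eq_left]
      exact max_le h1.1 h1.2
    rw [hM', Real.sqrt_one, inv_one, mul_one]
    nlinarith [trivialB]
  · by_cases h2 : N * |β₁| ≤ 16 * (N ^ 2 * |β₂|)
    · -- quadratic-dominated case
      have hb2 : β₂ ≠ 0 := by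
        intro h
        subst h
        simp only [abs_zero, mul_zero] at h2 h1
        have : N * |β₁| = 0 := le_antisymm (by linarith) (by positivity)
        exact h1 ⟨by linarith, by norm_num⟩
      have h1' : (1:ℝ) ≤ 16 * (N ^ 2 * |β₂|) := by
        rcases not_and_or.1 h1 with h | h <;> push_neg at h
        · linarith
        · nlinarith [abs_nonneg β₂]
      have hMle : M ≤ 16 * (N ^ 2 * |β₂|) := by
        rw [hM]
        apply max_le h1' (max_le (by linarith) (by nlinarith [abs_nonneg β₂]))
      have hsqrt : Real.sqrt M ≤ 4 * N * Real.sqrt |β₂| := by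
        have he : (16 * (N ^ 2 * |β₂|)) = (4*N)^2 * |β₂| := by ring
        calc Real.sqrt M ≤ Real.sqrt (16 * (N ^ 2 * |β₂|)) := Real.sqrt_le_sqrt hMle
          _ = 4 * N * Real.sqrt |β₂| := by
              rw [he, Real.sqrt_mul (by positivity), Real.sqrt_sq (by positivity)]
      have hb2' : 0 < Real.sqrt |β₂| := Real.sqrt_pos.2 (abs_pos.2 hb2)
      have hIb : ‖∫ ξ in (0:ℝ)..N,
          Complex.exp (2*π*Complex.I*((β₁*ξ + β₂*ξ^2 : ℝ):ℂ))‖ ≤ 4 / Real.sqrt |β₂| := by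
        rw [normI β₁ β₂ N hb2]
        exact fresnel β₂ hb2 _ _
      calc ‖∫ ξ in (0:ℝ)..N, Complex.exp (2*π*Complex.I*((β₁*ξ + β₂*ξ^2 : ℝ):ℂ))‖
          ≤ 4 / Real.sqrt |β₂| := hIb
        _ = 16 * N / (4 * N * Real.sqrt |β₂|) := by field_simp; ring
        _ ≤ 16 * N / Real.sqrt M := by gcongr
        _ = 16 * N * (Real.sqrt M)⁻¹ := by rw [div_eq_mul_inv]
    · -- linear-dominated case
      push_neg at h2
      have hb1 : β₁ ≠ 0 := by
        intro h
        subst h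
        simp only [abs_zero, mul_zero] at h2
        nlinarith [abs_nonneg β₂, sq_nonneg N]
      have hb1' : 0 < |β₁| := abs_pos.2 hb1
      have hNb1 : (1:ℝ) ≤ N * |β₁| := by
        rcases not_and_or.1 h1 with h | h <;> push_neg at h
        · linarith
        · nlinarith [abs_nonneg β₂]
      have hMle : M ≤ N * |β₁| := by
        rw [hM]
        exact max_le hNb1 (max_le le_rfl (by nlinarith [abs_nonneg β₂]))
      have hbound : ‖∫ ξ in (0:ℝ)..N,
          Complex.exp (2*π*Complex.I*((β₁*ξ + β₂*ξ^2 : ℝ):ℂ))‖ ≤ 1 / |β₁| := by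
        rcases eq_or_ne β₂ 0 with rfl | hb2
        · exact linCase β₁ N hb1
        · rw [normI β₁ β₂ N hb2]
          set a : ℝ := β₁ / (2 * β₂) with ha
          have hb2pos : 0 < |β₂| := abs_pos.2 hb2
          have haabs : |a| = |β₁| / (2 * |β₂|) := by
            rw [ha, abs_div, abs_mul, abs_of_nonneg (by norm_num : (0:ℝ) ≤ 2)]
          have h16 : 16 * (N * |β₂|) < |β₁| := by
            have := h2
            nlinarith
          have h8 : 8 * N < |a| := by
            rw [haabs, lt_div_iff₀ (by positivity)]
            nlinarith
          have hπ : (0:ℝ) < π := pi_pos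
          rcases lt_trichotomy a 0 with hneg | hzero | hpos
          · have habsneg : |a| = -a := abs_of_neg hneg
            have hval : 2 * |β₂| * (-a) = |β₁| := by
              rw [← habsneg, haabs]; field_simp
            have hpos' : 0 < -(N + a) := by
              rw [habsneg] at h8; linarith
            rw [flipEE]
            have hfar := far β₂ hb2 (-(N + a)) (-a) hpos' (by linarith)
            refine hfar.trans ?_
            rw [div_le_div_iff₀ (by positivity) hb1']
            have hkey : -(N + a) ≥ (7/8) * (-a) := by
              rw [habsneg] at h8; linarith
            nlinarith [pi_gt_three, mul_pos hb2pos (by linarith [hpos'] : (0:ℝ) < -a)]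
          · exfalso
            rw [ha, div_eq_zero_iff] at hzero
            rcases hzero with h | h
            · exact hb1 h
            · norm_num at h; exact hb2 h
          · have habspos : |a| = a := abs_of_pos hpos
            have hval : 2 * |β₂| * a = |β₁| := by
              rw [← habspos, haabs]; field_simp
            have hfar := far β₂ hb2 a (N + a) hpos (by linarith)
            refine hfar.trans ?_
            rw [div_le_div_iff₀ (by positivity) hb1']
            nlinarith [pi_gt_three, mul_pos hb2pos hpos]
      have hs1 : Real.sqrt (N * |β₁|) ≤ N * |β₁| := by
        nlinarith [Real.sq_sqrt (show (0:ℝ) ≤ N * |β₁| by positivity),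
          Real.sqrt_nonneg (N * |β₁|)]
      have hsMle : Real.sqrt M ≤ N * |β₁| := (Real.sqrt_le_sqrt hMle).trans hs1
      calc ‖∫ ξ in (0:ℝ)..N, Complex.exp (2*π*Complex.I*((β₁*ξ + β₂*ξ^2 : ℝ):ℂ))‖
          ≤ 1 / |β₁| := hbound
        _ = N / (N * |β₁|) := by field_simp
        _ ≤ N / Real.sqrt M := by gcongr
        _ ≤ 16 * N / Real.sqrt M := by gcongr; linarith
        _ = 16 * N * (Real.sqrt M)⁻¹ := by rw [div_eq_mul_inv]
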